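/- arXiv:1812.11595 — 4 statements merged into one kernel-verified Lean document; each statement's English description precedes it below -/
import Mathlib

section
/- The line ℓ = {(x,y) : x + y + 1 = 0} is invariant under the Newton map N_f of f(x,y) = (y − x², x − y²), and the restriction of N_f to ℓ (parametrized by x ↦ (x, −1−x)) is the one-dimensional Newton map of p(x) = x² + x + 1. -/
/-!
On the line `x + y + 1 = 0` both components of `f(x,y) = (y − x², x − y²)` equal `−p(x)`, and the
Jacobian `[[−2x, 1], [1, −2y]]` maps the direction `(1, −1)` of the line to `−(2x + 1)(1, 1) = −p'(x)(1, 1)`.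
Hence the Newton step `J⁻¹ f` is `(p/p', −p/p')`, which moves along the line exactly as the
one-dimensional Newton step of `p`. Invertibility of `J` is `4xy ≠ 1`, which on the line reads
`(2x + 1)² ≠ 0`.
-/

/-- Newton map on the plane. -/
noncomputable def newton2 (f : ℝ × ℝ → ℝ × ℝ) (x : ℝ × ℝ) : ℝ × ℝ :=
  x - (fderiv ℝ f x).inverse (f x)
/-- One-dimensional Newton map. -/
noncomputable def newton1 (q : ℝ → ℝ) (x : ℝ) : ℝ :=
  x - q x / deriv q x

open ContinuousLinearMap

theorem ContinuousLinearMap.isInvertible_of_injective {𝕜 E : Type*} [NontriviallyNormedField 𝕜]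
    [CompleteSpace 𝕜] [NormedAddCommGroup E] [NormedSpace 𝕜 E] [FiniteDimensional 𝕜 E]
    {A : E →L[𝕜] E} (hA : Function.Injective A) : A.IsInvertible :=
  ⟨(LinearEquiv.ofInjectiveEndo A.toLinearMap hA).toContinuousLinearEquiv, rfl⟩

theorem newton2_eq_of_hasFDerivAt {f : ℝ × ℝ → ℝ × ℝ} {A : ℝ × ℝ →L[ℝ] ℝ × ℝ} {z v : ℝ × ℝ}
    (hf : HasFDerivAt f A z) (hA : A.IsInvertible) (hv : A v = f z) :
    newton2 f z = z - v := by
  rw [newton2, hf.fderiv, ← hv, hA.inverse_apply_self]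

noncomputable def quadJacobian (a b : ℝ) : ℝ × ℝ →L[ℝ] ℝ × ℝ :=
  (snd ℝ ℝ ℝ - (2 * a) • fst ℝ ℝ ℝ).prod (fst ℝ ℝ ℝ - (2 * b) • snd ℝ ℝ ℝ)

@[simp]
theorem quadJacobian_apply (a b : ℝ) (v : ℝ × ℝ) :
    quadJacobian a b v = (v.2 - 2 * a * v.1, v.1 - 2 * b * v.2) :=
  rfl

theorem hasFDerivAt_quadJacobian (z : ℝ × ℝ) :
    HasFDerivAt (fun w : ℝ × ℝ => (w.2 - w.1 ^ 2, w.1 - w.2 ^ 2)) (quadJacobian z.1 z.2) z := by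
  have h₁ := (hasFDerivAt_snd (𝕜 := ℝ) (p := z)).fun_sub ((hasFDerivAt_fst (p := z)).pow 2)
  have h₂ := (hasFDerivAt_fst (𝕜 := ℝ) (p := z)).fun_sub ((hasFDerivAt_snd (p := z)).pow 2)
  refine (h₁.prodMk h₂).congr_fderiv ?_
  ext <;> simp [quadJacobian]

theorem quadJacobian_injective {a b : ℝ} (h : 4 * a * b ≠ 1) :
    Function.Injective (quadJacobian a b) := by
  rw [injective_iff_map_eq_zero]
  rintro ⟨u, w⟩ huw
  simp only [quadJacobian_apply, Prod.mk_eq_zero] at huw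
  obtain ⟨h₁, h₂⟩ := huw
  have hu : u * (1 - 4 * a * b) = 0 := by linear_combination h₂ + 2 * b * h₁
  obtain rfl : u = 0 := by simpa [sub_eq_zero, Ne.symm h] using hu
  simp_all

theorem hasDerivAt_sq_add_self_add_one (x : ℝ) :
    HasDerivAt (fun t : ℝ => t ^ 2 + t + 1) (2 * x + 1) x := by
  simpa using ((hasDerivAt_pow 2 x).add (hasDerivAt_id x)).add_const 1

/-- The ghost line `{x + y + 1 = 0}` is invariant under the Newton map of
`f(x,y) = (y − x², x − y²)`, and on it (parametrized by `x ↦ (x, −1−x)`) the Newton map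
restricts to the one-dimensional Newton map of `p(x) = x² + x + 1`. -/
theorem stmt_11 (f : ℝ × ℝ → ℝ × ℝ)
    (hf : ∀ z : ℝ × ℝ, f z = (z.2 - z.1 ^ 2, z.1 - z.2 ^ 2))
    (p : ℝ → ℝ) (hp : ∀ x, p x = x ^ 2 + x + 1)
    (x : ℝ) (hx : 4 * x * (-1 - x) ≠ 1) :
    newton2 f (x, -1 - x) = (newton1 p x, -1 - newton1 p x) := by
  have hp' : deriv p x = 2 * x + 1 := by
    rw [funext hp]
    exact (hasDerivAt_sq_add_self_add_one x).deriv
  have hx' : 2 * x + 1 ≠ 0 := fun h => hx (by linear_combination (-(2 * x + 1)) * h)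
  have hJ : HasFDerivAt f (quadJacobian x (-1 - x)) (x, -1 - x) := by
    rw [funext hf]
    exact hasFDerivAt_quadJacobian (x, -1 - x)
  obtain ⟨t, ht⟩ : ∃ t, t = p x / (2 * x + 1) := ⟨_, rfl⟩
  have hpt : p x = (2 * x + 1) * t := by rw [ht, mul_div_cancel₀ _ hx']
  have hstep : quadJacobian x (-1 - x) (t, -t) = f (x, -1 - x) := by
    simp only [quadJacobian_apply, hf, Prod.ext_iff]
    constructor <;> linear_combination hpt - hp x
  rw [newton2_eq_of_hasFDerivAt hJ (isInvertible_of_injective (quadJacobian_injective hx)) hstep,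
    newton1, hp', ← ht, Prod.mk_sub_mk, sub_neg_eq_add, ← sub_add]
end

section
/- Let D = {(x,y) ∈ ℝ² : x + y ≤ −1}. Then D is invariant under each of the three maps w₁₀, w₀₁, w₁₁ defined by w_{m,n}(x₀,y₀) = (x₀ + (−1)^m √(x₀² − y₀), y₀ + (−1)^n √(y₀² − x₀)) with (m,n) ∈ {(1,0),(0,1),(1,1)}; in particular the square roots are real on D. -/
set_option maxHeartbeats 1000000


/-- The half-plane `D = {x + y ≤ −1}` is invariant under the three inverse branches
`w₁₀, w₀₁, w₁₁` of the Newton map of `f(x,y) = (y − x², x − y²)`; in particular the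
square roots are real on `D`. -/
theorem stmt_14 (x₀ y₀ : ℝ) (hD : x₀ + y₀ ≤ -1) :
    (x₀ ^ 2 ≥ y₀ ∧ y₀ ^ 2 ≥ x₀) ∧
    (x₀ - Real.sqrt (x₀ ^ 2 - y₀)) + (y₀ + Real.sqrt (y₀ ^ 2 - x₀)) ≤ -1 ∧
    (x₀ + Real.sqrt (x₀ ^ 2 - y₀)) + (y₀ - Real.sqrt (y₀ ^ 2 - x₀)) ≤ -1 ∧
    (x₀ - Real.sqrt (x₀ ^ 2 - y₀)) + (y₀ - Real.sqrt (y₀ ^ 2 - x₀)) ≤ -1 := by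
  set a := Real.sqrt (x₀ ^ 2 - y₀) with ha_def
  set b := Real.sqrt (y₀ ^ 2 - x₀) with hb_def
  set s : ℝ := -1 - x₀ - y₀ with hs_def
  have hs0 : 0 ≤ s := by simp only [hs_def]; linarith
  have h1 : (x₀ + 1/2) ^ 2 ≤ x₀ ^ 2 - y₀ := by nlinarith
  have h2 : (y₀ + 1/2) ^ 2 ≤ y₀ ^ 2 - x₀ := by nlinarith
  have ha0 : 0 ≤ a := Real.sqrt_nonneg _
  have hb0 : 0 ≤ b := Real.sqrt_nonneg _
  have ha2 : a ^ 2 = x₀ ^ 2 - y₀ := Real.sq_sqrt (by nlinarith)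
  have hb2 : b ^ 2 = y₀ ^ 2 - x₀ := Real.sq_sqrt (by nlinarith)
  have haabs : |x₀ + 1/2| ≤ a := by
    rw [ha_def, ← Real.sqrt_sq_eq_abs]; exact Real.sqrt_le_sqrt h1
  have hbabs : |y₀ + 1/2| ≤ b := by
    rw [hb_def, ← Real.sqrt_sq_eq_abs]; exact Real.sqrt_le_sqrt h2
  obtain ⟨ha1, ha1'⟩ := abs_le.mp haabs
  obtain ⟨hb1, hb1'⟩ := abs_le.mp hbabs
  -- a + s ≥ 0 and b + s ≥ 0
  have has : 0 ≤ a + s := by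
    rcases le_or_gt y₀ (-1/2) with h | h
    · simp only [hs_def]; linarith
    · simp only [hs_def]; linarith
  have hbs : 0 ≤ b + s := by
    rcases le_or_gt x₀ (-1/2) with h | h
    · simp only [hs_def]; linarith
    · simp only [hs_def]; linarith
  -- branch w₁₀ : b ≤ a + s
  have k1 : b ≤ a + s := by
    have hsq : y₀ ^ 2 - x₀ ≤ (a + s) ^ 2 := by
      have hprod : 0 ≤ s * (2*a - 2*x₀ - 1) :=
        mul_nonneg hs0 (by linarith)
      simp only [hs_def] at hprod ⊢
      nlinarith [hprod, ha2]
    calc b ≤ Real.sqrt ((a + s) ^ 2) := Real.sqrt_le_sqrt hsq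
    _ = a + s := by rw [Real.sqrt_sq has]
  -- branch w₀₁ : a ≤ b + s
  have k2 : a ≤ b + s := by
    have hsq : x₀ ^ 2 - y₀ ≤ (b + s) ^ 2 := by
      have hprod : 0 ≤ s * (2*b - 2*y₀ - 1) :=
        mul_nonneg hs0 (by linarith)
      simp only [hs_def] at hprod ⊢
      nlinarith [hprod, hb2]
    calc a ≤ Real.sqrt ((b + s) ^ 2) := Real.sqrt_le_sqrt hsq
    _ = b + s := by rw [Real.sqrt_sq hbs]
  have hsval : s = -1 - x₀ - y₀ := hs_def
  refine ⟨⟨by nlinarith, by nlinarith⟩, by linarith, by linarith, by linarith⟩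
end

section
/- For f(x,y) = (y − x², x − y²), the image N_f(ℝ²) of the Newton map is disjoint from the open set C = {(x,y) : y > x² or x > y²}; equivalently, every point (x₀,y₀) in the image satisfies x₀² ≥ y₀ and y₀² ≥ x₀. -/
/-!
The Jacobian of `f(x,y) = (y − x², x − y²)` is `[[-2x, 1], [1, -2y]]`, of determinant
`4xy − 1`, so away from `4xy = 1` the Newton map is the rational map
`(x,y) ↦ (y(2x²+y), x(2y²+x)) / (4xy − 1)`. For its image point `(x₀,y₀)` one has
`x₀² − y₀ = ((2x²y − y² − x)/(4xy − 1))²`, and symmetrically for `y₀² − x₀`.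
-/

open ContinuousLinearMap

theorem newton2_eq_of_hasFDerivAt_s16 {f : ℝ × ℝ → ℝ × ℝ} {p : ℝ × ℝ} {L M : ℝ × ℝ →L[ℝ] ℝ × ℝ}
    (hL : HasFDerivAt f L p) (hML : Function.LeftInverse M L) (hLM : Function.RightInverse M L) :
    newton2 f p = p - M (f p) := by
  have hinv : L.inverse = M :=
    inverse_equiv (ContinuousLinearEquiv.equivOfInverse L M hML hLM)
  rw [newton2, hL.fderiv, hinv]

theorem hasFDerivAt_sub_sq (x y : ℝ) :
    HasFDerivAt (fun z : ℝ × ℝ => (z.2 - z.1 ^ 2, z.1 - z.2 ^ 2))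
      ((snd ℝ ℝ ℝ - (2 * x) • fst ℝ ℝ ℝ).prod (fst ℝ ℝ ℝ - (2 * y) • snd ℝ ℝ ℝ)) (x, y) := by
  have hx := (hasFDerivAt_fst (𝕜 := ℝ) (p := (x, y))).pow 2
  have hy := (hasFDerivAt_snd (𝕜 := ℝ) (p := (x, y))).pow 2
  refine (hasFDerivAt_snd.sub hx).prodMk (hasFDerivAt_fst.sub hy) |>.congr_fderiv ?_
  norm_num

theorem newton2_sub_sq (x y : ℝ) (h : 4 * x * y ≠ 1) :
    newton2 (fun z : ℝ × ℝ => (z.2 - z.1 ^ 2, z.1 - z.2 ^ 2)) (x, y) =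
      (y * (2 * x ^ 2 + y) / (4 * x * y - 1), x * (2 * y ^ 2 + x) / (4 * x * y - 1)) := by
  have hD : 4 * x * y - 1 ≠ 0 := sub_ne_zero.mpr h
  rw [newton2_eq_of_hasFDerivAt_s16 (hasFDerivAt_sub_sq x y)
    (M := (4 * x * y - 1)⁻¹ • ((-(2 * y)) • fst ℝ ℝ ℝ - snd ℝ ℝ ℝ).prod
      (-fst ℝ ℝ ℝ - (2 * x) • snd ℝ ℝ ℝ))]
  all_goals
    try intro z
    simp only [prod_apply, sub_apply, smul_apply, neg_apply, coe_fst', coe_snd', smul_eq_mul,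
      Prod.smul_mk, Prod.mk_sub_mk, Prod.ext_iff]
  · rw [div_eq_mul_inv, div_eq_mul_inv]
    constructor
    · linear_combination (-x) * mul_inv_cancel₀ hD
    · linear_combination (-y) * mul_inv_cancel₀ hD
  all_goals constructor <;> field_simp <;> ring

theorem sq_div_sub_div_eq_sq_div {x y : ℝ} (h : 4 * x * y ≠ 1) :
    (y * (2 * x ^ 2 + y) / (4 * x * y - 1)) ^ 2 - x * (2 * y ^ 2 + x) / (4 * x * y - 1) =
      ((2 * x ^ 2 * y - y ^ 2 - x) / (4 * x * y - 1)) ^ 2 := by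
  have hD : 4 * x * y - 1 ≠ 0 := sub_ne_zero.mpr h
  field_simp
  ring

/-- The image of the Newton map of `f(x,y) = (y − x², x − y²)` is disjoint from the open
set `C = {y > x² or x > y²}`: every image point `(x₀,y₀)` satisfies `x₀² ≥ y₀` and
`y₀² ≥ x₀`. -/
theorem stmt_16 (f : ℝ × ℝ → ℝ × ℝ)
    (hf : ∀ z : ℝ × ℝ, f z = (z.2 - z.1 ^ 2, z.1 - z.2 ^ 2))
    (x y : ℝ) (h : 4 * x * y ≠ 1) :
    (newton2 f (x, y)).1 ^ 2 ≥ (newton2 f (x, y)).2 ∧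
    (newton2 f (x, y)).2 ^ 2 ≥ (newton2 f (x, y)).1 := by
  obtain rfl : f = fun z : ℝ × ℝ => (z.2 - z.1 ^ 2, z.1 - z.2 ^ 2) := funext hf
  have h' : 4 * y * x ≠ 1 := by rwa [mul_right_comm]
  have hfst := sq_div_sub_div_eq_sq_div h
  have hsnd := sq_div_sub_div_eq_sq_div h'
  rw [mul_right_comm 4 y x] at hsnd
  rw [newton2_sub_sq x y h]
  exact ⟨sub_nonneg.mp (hfst ▸ sq_nonneg _), sub_nonneg.mp (hsnd ▸ sq_nonneg _)⟩
end

section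
/- Let q be a real quadratic polynomial with two distinct real roots r₁ < r₂. Then the Newton map N_q has exactly the fixed points r₁ and r₂, the midpoint c = (r₁+r₂)/2 is the unique point where N_q is undefined, N_q maps (c, ∞) into itself with iterates converging to r₂, and N_q maps (−∞, c) into itself with iterates converging to r₁. -/
open Filter Function Set Topology

theorem tendsto_iterate_of_dist_le_mul {α : Type*} [PseudoMetricSpace α] {f : α → α}
    {s : Set α} {r : α} {K : ℝ} (hK₀ : 0 ≤ K) (hK : K < 1) (hs : MapsTo f s s)
    (hf : ∀ x ∈ s, dist (f x) r ≤ K * dist x r) {x : α} (hx : x ∈ s) :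
    Tendsto (fun k => f^[k] x) atTop (𝓝 r) := by
  have hdist : ∀ k : ℕ, dist (f^[k] x) r ≤ K ^ k * dist x r := by
    intro k
    induction k with
    | zero => simp
    | succ k ih =>
      rw [iterate_succ_apply', pow_succ', mul_assoc]
      exact (hf _ (hs.iterate k hx)).trans (mul_le_mul_of_nonneg_left ih hK₀)
  refine tendsto_iff_dist_tendsto_zero.2 (squeeze_zero (fun _ => dist_nonneg) hdist ?_)
  simpa using (tendsto_pow_atTop_nhds_zero_of_lt_one hK₀ hK).mul_const (dist x r)

theorem newton1_eq_self_iff {q : ℝ → ℝ} {x : ℝ} (hx : deriv q x ≠ 0) :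
    newton1 q x = x ↔ q x = 0 := by
  rw [newton1, sub_eq_self, div_eq_zero_iff, or_iff_left hx]

theorem newton1_comp_neg (q : ℝ → ℝ) (x : ℝ) :
    newton1 (fun y => q (-y)) x = -newton1 q (-x) := by
  simp only [newton1, deriv_comp_neg, div_neg]
  ring

theorem iterate_newton1_comp_neg (q : ℝ → ℝ) (k : ℕ) (x : ℝ) :
    (newton1 fun y => q (-y))^[k] x = -(newton1 q)^[k] (-x) := by
  have hconj : Semiconj Neg.neg (newton1 fun y => q (-y)) (newton1 q) := fun y => by
    rw [newton1_comp_neg, neg_neg]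
  rw [← hconj.iterate_right k x, neg_neg]

section Quadratic

variable {a r₁ r₂ : ℝ} {q : ℝ → ℝ}

theorem deriv_eq_of_quadratic (hq : ∀ x, q x = a * (x - r₁) * (x - r₂)) (x : ℝ) :
    deriv q x = a * (2 * x - r₁ - r₂) := by
  have hderiv : HasDerivAt q (a * (1 * (x - r₂) + (x - r₁) * 1)) x := by
    rw [funext hq]
    simp_rw [mul_assoc]
    exact (((hasDerivAt_id x).sub_const r₁).mul ((hasDerivAt_id x).sub_const r₂)).const_mul a
  rw [hderiv.deriv]
  ring

theorem eq_zero_iff_of_quadratic (hq : ∀ x, q x = a * (x - r₁) * (x - r₂)) (ha : a ≠ 0)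
    (x : ℝ) : q x = 0 ↔ x = r₁ ∨ x = r₂ := by
  simp [hq, ha, sub_eq_zero]

theorem newton1_sub_root_of_quadratic (hq : ∀ x, q x = a * (x - r₁) * (x - r₂)) (ha : a ≠ 0)
    {x : ℝ} (hx : 2 * x - r₁ - r₂ ≠ 0) :
    newton1 q x - r₂ = (x - r₂) ^ 2 / (2 * x - r₁ - r₂) := by
  rw [newton1, deriv_eq_of_quadratic hq, hq, mul_assoc, mul_div_mul_left _ _ ha,
    eq_div_iff hx, sub_sub, sub_mul, add_mul, div_mul_cancel₀ _ hx]
  ring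

theorem root_le_newton1_of_quadratic (hq : ∀ x, q x = a * (x - r₁) * (x - r₂)) (ha : a ≠ 0)
    {x : ℝ} (hx : r₁ + r₂ < 2 * x) : r₂ ≤ newton1 q x := by
  have h := newton1_sub_root_of_quadratic hq ha (x := x) (by linarith)
  have : 0 ≤ (x - r₂) ^ 2 / (2 * x - r₁ - r₂) := div_nonneg (sq_nonneg _) (by linarith)
  linarith

theorem dist_newton1_root_le_of_quadratic (hq : ∀ x, q x = a * (x - r₁) * (x - r₂))
    (ha : a ≠ 0) (hr : r₁ < r₂) {x : ℝ} (hx : r₂ ≤ x) :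
    dist (newton1 q x) r₂ ≤ 1 / 2 * dist x r₂ := by
  have hpos : 0 < 2 * x - r₁ - r₂ := by linarith
  have hstep := root_le_newton1_of_quadratic hq ha (x := x) (by linarith)
  rw [Real.dist_eq, Real.dist_eq, abs_of_nonneg (by linarith), abs_of_nonneg (by linarith),
    newton1_sub_root_of_quadratic hq ha hpos.ne', div_le_iff₀ hpos]
  nlinarith

theorem tendsto_iterate_newton1_of_quadratic (hq : ∀ x, q x = a * (x - r₁) * (x - r₂))
    (ha : a ≠ 0) (hr : r₁ < r₂) {x : ℝ} (hx : r₁ + r₂ < 2 * x) :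
    Tendsto (fun k => (newton1 q)^[k] x) atTop (𝓝 r₂) := by
  have hmaps : MapsTo (newton1 q) (Ici r₂) (Ici r₂) := fun y (hy : r₂ ≤ y) =>
    root_le_newton1_of_quadratic hq ha (by linarith)
  have hlim := tendsto_iterate_of_dist_le_mul (by norm_num) (by norm_num) hmaps
    (fun y hy => dist_newton1_root_le_of_quadratic hq ha hr hy)
    (root_le_newton1_of_quadratic hq ha hx)
  rw [← tendsto_add_atTop_iff_nat 1]
  simpa only [iterate_succ_apply] using hlim

end Quadratic

/-- For a quadratic `q(x) = a(x − r₁)(x − r₂)` with distinct real roots `r₁ < r₂`: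
the fixed points of `N_q` are exactly `r₁` and `r₂`; the midpoint `c = (r₁+r₂)/2` is the
unique point where `N_q` is undefined (`q' = 0`); `(c, ∞)` is invariant with iterates
converging to `r₂`, and `(−∞, c)` is invariant with iterates converging to `r₁`. -/
theorem stmt_19 (a r₁ r₂ : ℝ) (ha : a ≠ 0) (hr : r₁ < r₂)
    (q : ℝ → ℝ) (hq : ∀ x, q x = a * (x - r₁) * (x - r₂))
    (c : ℝ) (hc : c = (r₁ + r₂) / 2) :
    (∀ x : ℝ, deriv q x ≠ 0 → (newton1 q x = x ↔ x = r₁ ∨ x = r₂)) ∧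
    (∀ x : ℝ, deriv q x = 0 ↔ x = c) ∧
    (∀ x : ℝ, x > c → newton1 q x > c) ∧
    (∀ x : ℝ, x > c →
      Filter.Tendsto (fun k : ℕ => (newton1 q)^[k] x) Filter.atTop (nhds r₂)) ∧
    (∀ x : ℝ, x < c → newton1 q x < c) ∧
    (∀ x : ℝ, x < c →
      Filter.Tendsto (fun k : ℕ => (newton1 q)^[k] x) Filter.atTop (nhds r₁)) := by
  subst hc
  have hq' : ∀ x, q (-x) = a * (x - -r₂) * (x - -r₁) := fun x => by rw [hq]; ring
  refine ⟨fun x hx => (newton1_eq_self_iff hx).trans (eq_zero_iff_of_quadratic hq ha x),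
    fun x => ?_, fun x hx => ?_, fun x hx => ?_, fun x hx => ?_, fun x hx => ?_⟩
  · rw [deriv_eq_of_quadratic hq, mul_eq_zero, or_iff_right ha]
    constructor <;> intro h <;> linarith
  · linarith [root_le_newton1_of_quadratic hq ha (x := x) (by linarith)]
  · exact tendsto_iterate_newton1_of_quadratic hq ha hr (by linarith)
  · have h := root_le_newton1_of_quadratic hq' ha (x := -x) (by linarith)
    rw [newton1_comp_neg, neg_neg] at h
    linarith
  · have h := (tendsto_iterate_newton1_of_quadratic hq' ha (neg_lt_neg hr)
      (x := -x) (by linarith)).neg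
    simpa only [iterate_newton1_comp_neg, neg_neg] using h
end
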